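/- arXiv:1008.3808 — 2 statements merged into one kernel-verified Lean document; each statement's English description precedes it below -/
import Mathlib

section
/- Let f : ℂ → ℂ be entire (complex differentiable on all of ℂ) and map real numbers to real numbers. Then ∫_0^{π/2} Im[ f( (cos x) · e^{i x} ) ] dx = (1/2) · ∫_0^1 ( Re[f(ξ)] − Re[f(1/2)] ) / (ξ − 1/2) dξ, where the integrand on the right-hand side (which has a removable singularity at ξ = 1/2) is integrated over [0,1]. -/
/-!
Write `f z = f (1/2) + (z - 1/2) g z` with `g = dslope f (1/2)`, which is entire, and note that
`cos x · e^{ix} = 1/2 + e^{2ix}/2`. Since `f (1/2)` is real, the left side becomes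
`(1/2) ∫₀^π Im (w g (1/2 + w)) dθ` with `w = e^{iθ}/2`, i.e. an integral of `g` over the upper
semicircle above `[0, 1]`, while off `ξ = 1/2` the right-hand integrand is `Re g ξ`. The two agree
by Cauchy's theorem for the half-disk: `g` has a primitive, so its integrals along the semicircle
and along the diameter cancel, and the real part of that identity is the claim.
-/

open Real Complex intervalIntegral MeasureTheory

theorem integral_comp_mul_deriv_eq_sub_of_hasDerivAt {G g : ℂ → ℂ}
    (hG : ∀ z, HasDerivAt G (g z) z) (hg : Continuous g) {γ γ' : ℝ → ℂ}
    (hγ : ∀ t, HasDerivAt γ (γ' t) t) (hγ' : Continuous γ') (a b : ℝ) :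
    ∫ t in a..b, g (γ t) * γ' t = G (γ b) - G (γ a) := by
  have hγc : Continuous γ := continuous_iff_continuousAt.2 fun t => (hγ t).continuousAt
  exact integral_eq_sub_of_hasDerivAt (fun t _ => (hG (γ t)).comp t (hγ t))
    (((hg.comp hγc).mul hγ').intervalIntegrable a b)

theorem integral_im_semicircle_eq_integral_re {g : ℂ → ℂ} (hg : Differentiable ℂ g) (c r : ℝ) :
    ∫ θ in (0 : ℝ)..π, (r * exp (θ * I) * g (c + r * exp (θ * I))).im =
      ∫ ξ in (c - r)..(c + r), (g ξ).re := by
  obtain ⟨G, hG⟩ := hg.isExactOn_univ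
  replace hG : ∀ z, HasDerivAt G (g z) z := fun z => hG z trivial
  have hγ (θ : ℝ) :
      HasDerivAt (fun θ : ℝ => (c : ℂ) + r * exp (θ * I)) (r * exp (θ * I) * I) θ := by
    have := (((hasDerivAt_id (θ : ℂ)).mul_const I).cexp.const_mul (r : ℂ)).const_add (c : ℂ)
    simpa [mul_assoc] using this.comp_ofReal
  have harc : ∫ θ in (0 : ℝ)..π, g (c + r * exp (θ * I)) * (r * exp (θ * I) * I) =
      G (c - r) - G (c + r) := by
    rw [integral_comp_mul_deriv_eq_sub_of_hasDerivAt hG hg.continuous hγ (by fun_prop)]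
    simp [exp_pi_mul_I, sub_eq_add_neg]
  have hseg : ∫ ξ in (c - r)..(c + r), g ξ = G (c + r) - G (c - r) := by
    simpa using integral_comp_mul_deriv_eq_sub_of_hasDerivAt hG hg.continuous
      (fun t => (hasDerivAt_id (t : ℂ)).comp_ofReal) continuous_const (c - r) (c + r)
  have hre_integral {h : ℝ → ℂ} {a b : ℝ} (hh : Continuous h) :
      ∫ t in a..b, (h t).re = (∫ t in a..b, h t).re :=
    intervalIntegral_re (𝕜 := ℂ) (hh.intervalIntegrable a b)
  have hcont : Continuous fun θ : ℝ => g (c + r * exp (θ * I)) * (r * exp (θ * I) * I) := by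
    have := hg.continuous
    fun_prop
  calc ∫ θ in (0 : ℝ)..π, (r * exp (θ * I) * g (c + r * exp (θ * I))).im
      = -∫ θ in (0 : ℝ)..π, (g (c + r * exp (θ * I)) * (r * exp (θ * I) * I)).re := by
        rw [← intervalIntegral.integral_neg]
        congr 1 with θ
        simp only [mul_re, mul_im, I_re, I_im]
        ring
    _ = (∫ ξ in (c - r)..(c + r), g ξ).re := by
        rw [hre_integral hcont, harc, hseg, ← neg_re, neg_sub]
    _ = ∫ ξ in (c - r)..(c + r), (g ξ).re :=
        (hre_integral (h := fun ξ : ℝ => g ξ) (hg.continuous.comp continuous_ofReal)).symm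

theorem integral_re_div_sub_eq_integral_re_dslope (f : ℂ → ℂ) (c a b : ℝ) :
    ∫ ξ in a..b, ((f ξ).re - (f c).re) / (ξ - c) = ∫ ξ in a..b, (dslope f c ξ).re := by
  refine integral_congr_ae ?_
  filter_upwards [compl_mem_ae_iff.mpr (measure_singleton c)] with ξ (hξ : ξ ≠ c) _
  rw [dslope_of_ne f (by exact_mod_cast hξ), slope_def_field, ← ofReal_sub, div_ofReal_re,
    sub_re]

theorem ofReal_cos_mul_exp_I_mul (x : ℝ) :
    (Real.cos x : ℂ) * exp (I * x) = 1 / 2 + 1 / 2 * exp ((2 * x : ℝ) * I) := by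
  rw [ofReal_cos, Complex.cos, mul_comm I, div_mul_eq_mul_div, add_mul, ← Complex.exp_add,
    ← Complex.exp_add, neg_mul, neg_add_cancel, Complex.exp_zero]
  push_cast
  ring_nf

open Real in
theorem statement_10 (f : ℂ → ℂ) (hf : Differentiable ℂ f)
    (hreal : ∀ x : ℝ, (f x).im = 0) :
    ∫ x in (0 : ℝ)..(π / 2),
        (f ((Real.cos x : ℂ) * Complex.exp (Complex.I * x))).im =
      (1 / 2) * ∫ ξ in (0 : ℝ)..1,
        ((f ξ).re - (f (1 / 2)).re) / (ξ - 1 / 2) := by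
  have hg : Differentiable ℂ (dslope f (1 / 2)) :=
    differentiableOn_univ.1 ((differentiableOn_dslope Filter.univ_mem).2 hf.differentiableOn)
  have hf_im (z : ℂ) : (f z).im = ((z - 1 / 2) * dslope f (1 / 2) z).im := by
    have hc : (f (1 / 2)).im = 0 := by simpa using hreal (1 / 2)
    rw [← smul_eq_mul, sub_smul_dslope, sub_im, hc, sub_zero]
  have hlhs : ∫ x in (0 : ℝ)..(π / 2), (f ((Real.cos x : ℂ) * exp (I * x))).im =
      1 / 2 * ∫ θ in (0 : ℝ)..π,
        (1 / 2 * exp (θ * I) * dslope f (1 / 2) (1 / 2 + 1 / 2 * exp (θ * I))).im := by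
    simp_rw [ofReal_cos_mul_exp_I_mul, hf_im, add_sub_cancel_left]
    rw [integral_comp_mul_left (fun θ : ℝ =>
        (1 / 2 * exp (θ * I) * dslope f (1 / 2) (1 / 2 + 1 / 2 * exp (θ * I))).im) two_ne_zero,
      mul_zero, mul_div_cancel₀ _ two_ne_zero, smul_eq_mul, inv_eq_one_div (2 : ℝ)]
  have harc := integral_im_semicircle_eq_integral_re hg (1 / 2) (1 / 2)
  have hrhs := integral_re_div_sub_eq_integral_re_dslope f (1 / 2) 0 1
  push_cast at harc hrhs
  rw [hlhs, harc, hrhs]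
  norm_num
end

section
/- Let c > 0 be a real number. For every real x with |x| < c, the series Σ_{n=1}^{∞} (−1)^{n+1} · cos(n π x / c) / n converges and its sum equals ln( 2 · cos(π x / (2c)) ). -/
/-!
With `θ = π x / c ∈ (-π, π)`, the series is the real part of the Taylor series
`∑ (-1)^(n+1) z^n / n` of `log (1 + z)` at `z = e^{iθ}`. On the unit circle away from `z = -1`
this series converges by Dirichlet's test (its partial sums are weighted geometric sums of `-z`),
and Abel's limit theorem identifies its sum with `log (1 + z)`, the logarithm being continuous
there because `1 + z` lies in the slit plane. Finally
`Re log (1 + e^{iθ}) = log |1 + e^{iθ}| = log (2 cos (θ / 2))`.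
-/

open Filter Topology Finset Real

theorem norm_geom_sum_le_of_norm_le_one {𝕜 : Type*} [NormedDivisionRing 𝕜] {w : 𝕜}
    (hw : ‖w‖ ≤ 1) (hw1 : w ≠ 1) (n : ℕ) :
    ‖∑ i ∈ range n, w ^ i‖ ≤ 2 / ‖w - 1‖ := by
  rw [geom_sum_eq hw1, norm_div]
  gcongr
  calc ‖w ^ n - 1‖ ≤ ‖w ^ n‖ + ‖(1 : 𝕜)‖ := norm_sub_le _ _
    _ ≤ 2 := by rw [norm_pow, norm_one]; linarith [pow_le_one₀ (n := n) (norm_nonneg w) hw]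

namespace Complex

theorem one_add_mem_slitPlane_of_norm_le_one {z : ℂ} (hz : ‖z‖ ≤ 1) (hz1 : z ≠ -1) :
    1 + z ∈ slitPlane := by
  rw [mem_slitPlane_iff, add_re, one_re, add_im, one_im, zero_add]
  have hre : -1 ≤ z.re := (abs_le.mp ((abs_re_le_norm z).trans hz)).1
  by_contra! h
  exact hz1 (ext (by simp only [neg_re, one_re]; linarith) (by simpa using h.2))

theorem logTaylor_succ_eq_sum_smul (z : ℂ) (n : ℕ) :
    logTaylor (n + 1) z = ∑ i ∈ range n, ((i : ℝ) + 1)⁻¹ • (z * (-z) ^ i) := by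
  rw [logTaylor, sum_range_succ', Nat.cast_zero, div_zero, add_zero]
  refine sum_congr rfl fun i _ => ?_
  rw [real_smul, neg_pow]
  push_cast
  ring

theorem cauchySeq_logTaylor {z : ℂ} (hz : ‖z‖ ≤ 1) (hz1 : z ≠ -1) :
    CauchySeq fun n => logTaylor n z := by
  rw [← cauchySeq_shift 1]
  simp_rw [logTaylor_succ_eq_sum_smul]
  refine Antitone.cauchySeq_series_mul_of_tendsto_zero_of_bounded (b := ‖z‖ * (2 / ‖-z - 1‖))
    (fun a b hab => inv_anti₀ (by positivity) (by gcongr)) ?_ fun n => ?_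
  · simpa only [one_div] using tendsto_one_div_add_atTop_nhds_zero_nat (𝕜 := ℝ)
  · rw [← mul_sum, norm_mul]
    gcongr
    exact norm_geom_sum_le_of_norm_le_one (by rwa [norm_neg])
      (by contrapose! hz1; linear_combination -hz1) n

theorem tendsto_logTaylor_of_norm_le_one {z : ℂ} (hz : ‖z‖ ≤ 1) (hz1 : z ≠ -1) :
    Tendsto (fun n => logTaylor n z) atTop (𝓝 (log (1 + z))) := by
  obtain ⟨L, hL⟩ := cauchySeq_tendsto_of_complete (cauchySeq_logTaylor hz hz1)
  have habel := tendsto_map'_iff.mp (tendsto_tsum_powerSeries_nhdsWithin_lt hL)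
  have hpower : ∀ r ∈ Set.Ioo (-1 : ℝ) 1,
      ∑' n : ℕ, (-1) ^ (n + 1) * z ^ n / n * (r : ℂ) ^ n = log (1 + r * z) := by
    intro r hr
    have hrz : ‖(r : ℂ) * z‖ < 1 := by
      rw [norm_mul, norm_real, Real.norm_eq_abs]
      nlinarith [abs_lt.mpr ⟨hr.1, hr.2⟩, abs_nonneg r, norm_nonneg z]
    rw [← (hasSum_taylorSeries_log hrz).tsum_eq]
    congr 1 with n
    ring
  have hlog : Tendsto (fun r : ℝ => log (1 + r * z)) (𝓝[<] 1) (𝓝 (log (1 + z))) := by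
    have hcont : ContinuousAt (fun r : ℝ => log (1 + r * z)) 1 :=
      (continuousAt_clog (by simpa using one_add_mem_slitPlane_of_norm_le_one hz hz1)).comp
        (by fun_prop)
    simpa using hcont.tendsto.mono_left nhdsWithin_le_nhds
  have hL' : L = log (1 + z) :=
    tendsto_nhds_unique
      (habel.congr' (eventually_of_mem (Ioo_mem_nhdsLT (by norm_num)) hpower)) hlog
  exact hL' ▸ hL

theorem one_add_exp_mul_I (θ : ℝ) :
    1 + exp (θ * I) = exp ((θ / 2 : ℝ) * I) * (2 * Real.cos (θ / 2)) := by
  rw [ofReal_cos, two_cos, mul_add, ← exp_add, ← exp_add]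
  push_cast
  ring_nf
  rw [exp_zero, add_comm]

theorem norm_one_add_exp_mul_I (θ : ℝ) : ‖1 + exp (θ * I)‖ = 2 * |Real.cos (θ / 2)| := by
  rw [one_add_exp_mul_I, norm_mul, norm_exp_ofReal_mul_I, one_mul, norm_mul, norm_real,
    Real.norm_eq_abs]
  norm_num

theorem re_logTaylor_exp_mul_I (θ : ℝ) (n : ℕ) :
    (logTaylor n (exp (θ * I))).re = ∑ j ∈ range n, (-1) ^ (j + 1) * Real.cos (j * θ) / j := by
  rw [logTaylor, re_sum]
  refine sum_congr rfl fun j _ => ?_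
  have hterm : (-1) ^ (j + 1) * exp (θ * I) ^ j / j
      = (((-1) ^ (j + 1) / j : ℝ) : ℂ) * exp ((j * θ : ℝ) * I) := by
    rw [← exp_nat_mul]
    push_cast
    ring_nf
  rw [hterm, re_ofReal_mul, exp_ofReal_mul_I_re]
  ring

end Complex

theorem Real.tendsto_sum_range_neg_one_pow_mul_cos_div {θ : ℝ} (hθ : |θ| < π) :
    Tendsto (fun n => ∑ j ∈ range n, (-1) ^ (j + 1) * Real.cos (j * θ) / j) atTop
      (𝓝 (Real.log (2 * Real.cos (θ / 2)))) := by
  have hcos : 0 < Real.cos (θ / 2) :=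
    Real.cos_pos_of_mem_Ioo ⟨by linarith [abs_lt.mp hθ], by linarith [abs_lt.mp hθ]⟩
  have hnorm := Complex.norm_one_add_exp_mul_I θ
  rw [abs_of_pos hcos] at hnorm
  have hne : Complex.exp (θ * Complex.I) ≠ -1 := by
    intro h
    rw [h, add_neg_cancel, norm_zero] at hnorm
    linarith
  have h := (Complex.continuous_re.tendsto _).comp
    (Complex.tendsto_logTaylor_of_norm_le_one (Complex.norm_exp_ofReal_mul_I θ).le hne)
  simpa only [Function.comp_def, Complex.re_logTaylor_exp_mul_I, Complex.log_re, hnorm] using h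

open Real Filter in
theorem statement_15 (c : ℝ) (hc : 0 < c) (x : ℝ) (hx : |x| < c) :
    Tendsto (fun N : ℕ => ∑ n ∈ Finset.Icc 1 N,
        (-1 : ℝ) ^ (n + 1) * Real.cos (n * π * x / c) / n)
      atTop (nhds (Real.log (2 * Real.cos (π * x / (2 * c))))) := by
  have hθ : |π * x / c| < π := by
    rw [abs_div, abs_mul, abs_of_pos pi_pos, abs_of_pos hc, div_lt_iff₀ hc]
    exact mul_lt_mul_of_pos_left hx pi_pos
  have hsum (N : ℕ) : ∑ n ∈ Icc 1 N, (-1 : ℝ) ^ (n + 1) * Real.cos (n * π * x / c) / n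
      = ∑ n ∈ range (N + 1), (-1) ^ (n + 1) * Real.cos (n * (π * x / c)) / n := by
    -- the `n = 0` term is `… / 0 = 0`
    rw [range_eq_Ico, sum_eq_sum_Ico_succ_bot N.succ_pos, Nat.cast_zero, div_zero, zero_add]
    exact sum_congr (Ico_add_one_right_eq_Icc 1 N) fun n _ => by ring_nf
  rw [show π * x / (2 * c) = π * x / c / 2 by ring]
  simpa only [hsum] using
    (tendsto_add_atTop_iff_nat 1).mpr (tendsto_sum_range_neg_one_pow_mul_cos_div hθ)
end
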